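/- arXiv:math/0509379 — 2 statements merged into one kernel-verified Lean document; each statement's English description precedes it below -/
import Mathlib

section
/- If G is a finite non-abelian group, then |G| / k(G) ≥ 8/5, where k(G) is the number of conjugacy classes of G; equivalently, 5·|G| ≥ 8·k(G). -/
open ConjClasses

lemma center_index_ge_four {G : Type} [Group G] [Finite G]
    (h : ¬ ∀ a b : G, a * b = b * a) : 4 ≤ (Subgroup.center G).index := by
  by_contra hlt
  push_neg at hlt
  interval_cases hidx : (Subgroup.center G).index
  · exact (Subgroup.index_ne_zero_of_finite hidx).elim
  · exact h fun a b => by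
      have : Subgroup.center G = ⊤ := Subgroup.index_eq_one.mp hidx
      have hb : b ∈ Subgroup.center G := this ▸ Subgroup.mem_top b
      exact Subgroup.mem_center_iff.mp hb a
  · have : Nat.card (G ⧸ Subgroup.center G) = 2 := hidx
    have : IsCyclic (G ⧸ Subgroup.center G) := isCyclic_of_prime_card (p := 2) this
    exact h (commutative_of_cyclic_center_quotient (QuotientGroup.mk' _) (le_of_eq (QuotientGroup.ker_mk' _)))
  · have : Nat.card (G ⧸ Subgroup.center G) = 3 := hidx
    have : IsCyclic (G ⧸ Subgroup.center G) := isCyclic_of_prime_card (p := 3) this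
    exact h (commutative_of_cyclic_center_quotient (QuotientGroup.mk' _) (le_of_eq (QuotientGroup.ker_mk' _)))

/-- If `G` is a finite non-abelian group, then `|G| / k(G) ≥ 8/5`, where `k(G)`
is the number of conjugacy classes of `G`; equivalently `5·|G| ≥ 8·k(G)`. -/
theorem eight_mul_card_conjClasses_le_five_mul_card (G : Type) [Group G] [Finite G]
    (h : ¬ ∀ a b : G, a * b = b * a) :
    8 * Nat.card (ConjClasses G) ≤ 5 * Nat.card G := by
  classical
  cases nonempty_fintype G
  -- class equation
  have hclass := Group.card_center_add_sum_card_noncenter_eq_card G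
  set N : Finset (ConjClasses G) := (noncenter G).toFinset with hN
  -- each noncentral class has size ≥ 2
  have hsum : 2 * N.card ≤ ∑ x ∈ N, x.carrier.toFinset.card := by
    rw [mul_comm]
    refine Finset.card_nsmul_le_sum N _ 2 fun x hx => ?_
    have hx' : x.carrier.Nontrivial := by
      rw [hN, Set.mem_toFinset, mem_noncenter] at hx; exact hx
    obtain ⟨a, ha, b, hb, hab⟩ := hx'
    exact Finset.one_lt_card.mpr ⟨a, by simpa using ha, b, by simpa using hb, hab⟩
  -- count of conjugacy classes
  have hcompl : Fintype.card (Subgroup.center G)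
      = Fintype.card ((noncenter G)ᶜ : Set (ConjClasses G)) :=
    Fintype.card_congr ((mk_bijOn G).equiv _)
  have hNc : Fintype.card ((noncenter G)ᶜ : Set (ConjClasses G)) = Nᶜ.card := by
    rw [← Set.toFinset_card, Set.toFinset_compl]
  have hk : Fintype.card (ConjClasses G) = N.card + Fintype.card (Subgroup.center G) := by
    rw [hcompl, hNc, Finset.card_add_card_compl]
  -- center index
  have hidx : 4 * Fintype.card (Subgroup.center G) ≤ Fintype.card G := by
    have h4 := center_index_ge_four h
    have hmul := (Subgroup.center G).card_mul_index
    rw [Nat.card_eq_fintype_card, Nat.card_eq_fintype_card] at hmul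
    calc 4 * Fintype.card (Subgroup.center G)
        ≤ Fintype.card (Subgroup.center G) * (Subgroup.center G).index := by
          rw [mul_comm]; exact Nat.mul_le_mul_left _ h4
      _ = Fintype.card G := hmul
  rw [Nat.card_eq_fintype_card, Nat.card_eq_fintype_card]
  omega
end

section
/- If G is a nontrivial finite group with trivial center Z(G) = 1, then |G| ≥ 2·k(G), where k(G) is the number of conjugacy classes of G; moreover, equality |G| = 2·k(G) holds if and only if G is isomorphic to the symmetric group S₃. -/
/-!
By the class equation and `Z(G) = 1`, every class other than `{1}` has at least two elements, so
`|G| + 1 = 2 k(G) + ∑_c (|c| - 2)` (truncated subtraction). If `|G| < 2 k(G)`, all nontrivial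
classes have size 2, making `|G| = 2 k(G) - 1` even. If `|G| = 2 k(G)`, exactly one class `c` has
size 3 and all others at most 2. Centralizers of index at most 2 are normal, which forces
`|(xy)^G|` to divide `|x^G| |y^G|`; hence `G \ c` is a subgroup, of order `|G| - 3` dividing `|G|`,
and `|G| = 6`. A centreless group of order 6 acts faithfully on the three cosets of a subgroup of
order 2, since the kernel is a normal subgroup of order at most 2 and hence central.
-/

open Subgroup

section

variable {G : Type*} [Group G]

namespace Subgroup

theorem centralizer_singleton_inv (g : G) : centralizer {g⁻¹} = centralizer {g} := by
  ext k
  simp only [mem_centralizer_singleton_iff]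
  exact Commute.inv_right_iff

theorem normal_of_index_le_two {H : Subgroup G} [H.FiniteIndex] (hH : H.index ≤ 2) :
    H.Normal := by
  have := H.index_ne_zero_of_finite
  obtain hH | hH : H.index = 1 ∨ H.index = 2 := by omega
  · rw [index_eq_one.1 hH]
    infer_instance
  · exact normal_of_index_eq_two hH

theorem index_centralizer_mul_dvd (x y : G) [(centralizer {y}).Normal] :
    (centralizer {x * y}).index ∣ (centralizer {x}).index * (centralizer {y}).index := by
  have hle : centralizer {x} ⊓ centralizer {y} ≤ centralizer {x * y} := by
    intro g hg
    obtain ⟨hx, hy⟩ := mem_inf.1 hg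
    rw [mem_centralizer_singleton_iff] at hx hy ⊢
    rw [← mul_assoc, hx, mul_assoc, hy, mul_assoc]
  refine (index_dvd_of_le hle).trans ?_
  rw [← relIndex_mul_index inf_le_left, inf_relIndex_left, mul_comm]
  exact mul_dvd_mul_left _ (relIndex_dvd_index_of_normal _ _)

theorem Normal.le_center_of_card_le_two [Finite G] {N : Subgroup G} (hN : N.Normal)
    (h2 : Nat.card N ≤ 2) : N ≤ center G := by
  intro n hn
  rw [mem_center_iff]
  intro g
  by_contra hne
  have hn1 : n ≠ 1 := by
    rintro rfl
    simp at hne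
  have hconj1 : g * n * g⁻¹ ≠ 1 := by
    simpa [mul_inv_eq_one, mul_eq_left] using hn1
  have hconjn : g * n * g⁻¹ ≠ n := fun h => hne (mul_inv_eq_iff_eq_mul.1 h)
  have : Fintype N := Fintype.ofFinite N
  suffices 2 < Nat.card N by omega
  rw [Nat.card_eq_fintype_card, Fintype.two_lt_card_iff]
  refine ⟨1, ⟨n, hn⟩, ⟨g * n * g⁻¹, hN.conj_mem n hn g⟩, ?_, ?_, ?_⟩ <;>
    simp [Subtype.ext_iff, hn1.symm, hconj1.symm, hconjn.symm]

end Subgroup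

namespace ConjClasses

theorem ncard_carrier_mk (g : G) : (ConjClasses.mk g).carrier.ncard = (centralizer {g}).index := by
  rw [← ConjAct.orbit_eq_carrier_conjClasses, ← MulAction.index_stabilizer,
    centralizer_eq_comap_stabilizer]
  exact (index_comap_of_surjective _ ConjAct.toConjAct.surjective).symm

theorem ncard_carrier_mk_one : (ConjClasses.mk (1 : G)).carrier.ncard = 1 := by
  simp [ncard_carrier_mk]

theorem ncard_carrier_dvd_card [Finite G] (c : ConjClasses G) : c.carrier.ncard ∣ Nat.card G := by
  obtain ⟨g, rfl⟩ := c.exists_rep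
  rw [ncard_carrier_mk]
  exact index_dvd_card _

theorem one_lt_ncard_carrier [Finite G] (h : center G = ⊥) {c : ConjClasses G}
    (hc : c ≠ ConjClasses.mk 1) : 1 < c.carrier.ncard := by
  rw [Set.one_lt_ncard_iff_nontrivial, ← mem_noncenter]
  by_contra hnc
  obtain ⟨g, hg, rfl⟩ := (mk_bijOn G).surjOn hnc
  rw [SetLike.mem_coe, h, mem_bot] at hg
  exact hc (congrArg ConjClasses.mk hg)

end ConjClasses

open ConjClasses

theorem card_add_one_eq_two_mul_card_conjClasses_add_sum [Finite G] [Fintype (ConjClasses G)]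
    (h : center G = ⊥) :
    Nat.card G + 1 = 2 * Nat.card (ConjClasses G) + ∑ c : ConjClasses G, (c.carrier.ncard - 2) := by
  classical
  have hexcess (c : ConjClasses G) :
      c.carrier.ncard - 2 + 2 = c.carrier.ncard + if c = ConjClasses.mk 1 then 1 else 0 := by
    split_ifs with hc
    · rw [hc, ncard_carrier_mk_one]
    · have := one_lt_ncard_carrier h hc
      omega
  calc Nat.card G + 1
      = ∑ c, (c.carrier.ncard + if c = ConjClasses.mk 1 then 1 else 0) := by
        rw [Finset.sum_add_distrib, Finset.sum_ite_eq', if_pos (Finset.mem_univ _),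
          ← finsum_eq_sum_of_fintype, Group.sum_card_conj_classes_eq_card]
    _ = ∑ c, (c.carrier.ncard - 2 + 2) := Finset.sum_congr rfl fun c _ => (hexcess c).symm
    _ = 2 * Nat.card (ConjClasses G) + ∑ c : ConjClasses G, (c.carrier.ncard - 2) := by
        rw [Finset.sum_add_distrib, Finset.sum_const, Finset.card_univ, smul_eq_mul,
          Nat.card_eq_fintype_card]
        ring

theorem two_mul_card_conjClasses_le_card [Finite G] [Nontrivial G] (h : center G = ⊥) :
    2 * Nat.card (ConjClasses G) ≤ Nat.card G := by
  have := Fintype.ofFinite (ConjClasses G)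
  have hsum := card_add_one_eq_two_mul_card_conjClasses_add_sum h
  by_contra! hlt
  obtain ⟨g, hg⟩ := exists_ne (1 : G)
  have hg1 : ConjClasses.mk g ≠ ConjClasses.mk 1 := by
    rwa [Ne, mk_eq_mk_iff_isConj, isConj_one_left]
  have hzero : ∑ c : ConjClasses G, (c.carrier.ncard - 2) = 0 := by omega
  have hg2 : (ConjClasses.mk g).carrier.ncard = 2 := by
    have := one_lt_ncard_carrier h hg1
    have := Finset.sum_eq_zero_iff.1 hzero (ConjClasses.mk g) (Finset.mem_univ _)
    omega
  have := ncard_carrier_dvd_card (ConjClasses.mk g)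
  rw [hg2] at this
  omega

theorem exists_ncard_carrier_eq_three_of_card_eq [Finite G] (h : center G = ⊥)
    (heq : Nat.card G = 2 * Nat.card (ConjClasses G)) :
    ∃ c : ConjClasses G, c.carrier.ncard = 3 ∧ ∀ d ≠ c, d.carrier.ncard ≤ 2 := by
  have := Fintype.ofFinite (ConjClasses G)
  have hone : ∑ c : ConjClasses G, (c.carrier.ncard - 2) = 1 := by
    have := card_add_one_eq_two_mul_card_conjClasses_add_sum h
    omega
  obtain ⟨c, -, hc⟩ := Finset.exists_ne_zero_of_sum_ne_zero (hone ▸ one_ne_zero)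
  have hc1 := hone ▸ Finset.single_le_sum (fun _ _ => Nat.zero_le _) (Finset.mem_univ c)
  refine ⟨c, by omega, fun d hd => ?_⟩
  have := hone ▸ Finset.add_le_sum (fun _ _ => Nat.zero_le _) (Finset.mem_univ c)
    (Finset.mem_univ d) hd.symm
  omega

theorem card_eq_six_of_ncard_carrier_eq_three [Finite G] {c : ConjClasses G}
    (hc : c.carrier.ncard = 3) (hd : ∀ d ≠ c, d.carrier.ncard ≤ 2) : Nat.card G = 6 := by
  have hmem (g : G) : g ∈ c.carrier ↔ (centralizer {g}).index = 3 := by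
    rw [mem_carrier_iff_mk_eq, ← ncard_carrier_mk]
    refine ⟨fun hg => hg ▸ hc, fun hg => ?_⟩
    by_contra hne
    have := hd _ hne
    omega
  have hnmem (g : G) : g ∉ c.carrier ↔ (centralizer {g}).index ≤ 2 := by
    rw [mem_carrier_iff_mk_eq, ← ncard_carrier_mk]
    refine ⟨hd _, fun hg hgc => ?_⟩
    rw [hgc, hc] at hg
    omega
  let H : Subgroup G :=
    { carrier := c.carrierᶜ
      one_mem' := by
        rw [Set.mem_compl_iff, hnmem, ← ncard_carrier_mk, ncard_carrier_mk_one]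
        omega
      mul_mem' := by
        intro x y hx hy hxy
        rw [Set.mem_compl_iff, hnmem] at hx hy
        have := normal_of_index_le_two hy
        have h3 := (hmem _).1 hxy ▸ index_centralizer_mul_dvd x y
        have := (centralizer {x}).index_ne_zero_of_finite
        have := (centralizer {y}).index_ne_zero_of_finite
        rcases Nat.prime_three.dvd_mul.1 h3 with h3 | h3 <;> omega
      inv_mem' := by
        intro x hx
        rwa [Set.mem_compl_iff, hnmem, centralizer_singleton_inv, ← hnmem] }
  have hH : Nat.card H + 3 = Nat.card G := by
    rw [← hc, ← Set.ncard_add_ncard_compl c.carrier, add_comm]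
    rfl
  have h3 : 3 ∣ Nat.card G := hc ▸ ncard_carrier_dvd_card c
  have hH3 : Nat.card H ∣ 3 := (Nat.dvd_add_right dvd_rfl).1 (hH ▸ card_subgroup_dvd_card H)
  have := Nat.card_pos (α := H)
  have := Nat.le_of_dvd three_pos hH3
  interval_cases hcard : Nat.card H <;> omega

theorem nonempty_mulEquiv_perm_fin_three [Finite G] (h : center G = ⊥) (h6 : Nat.card G = 6) :
    Nonempty (G ≃* Equiv.Perm (Fin 3)) := by
  obtain ⟨b, hb⟩ := exists_prime_orderOf_dvd_card' (G := G) 2 (by rw [h6]; norm_num)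
  have hK : Nat.card (zpowers b) = 2 := by rw [Nat.card_zpowers, hb]
  have hindex : Nat.card (G ⧸ zpowers b) = 3 := by
    have := card_mul_index (zpowers b)
    rw [hK, h6] at this
    rw [← index_eq_card]
    omega
  have hcore : (zpowers b).normalCore = ⊥ :=
    eq_bot_iff.2 (h ▸ (normalCore_normal _).le_center_of_card_le_two
      (hK ▸ card_le_of_le (normalCore_le _)))
  have hinj : Function.Injective (MulAction.toPermHom G (G ⧸ zpowers b)) := by
    rw [← MonoidHom.ker_eq_bot_iff, ← normalCore_eq_ker, hcore]
  let e := (Finite.equivFinOfCardEq hindex).permCongrHom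
  let f := e.toMonoidHom.comp (MulAction.toPermHom G (G ⧸ zpowers b))
  have hf : Function.Bijective f := by
    refine (Nat.bijective_iff_injective_and_card f).2 ⟨e.injective.comp hinj, ?_⟩
    rw [h6, Nat.card_perm, Nat.card_fin]
    rfl
  exact ⟨MulEquiv.ofBijective f hf⟩

theorem MulEquiv.card_conjClasses_eq {H : Type*} [Group H] (e : G ≃* H) :
    Nat.card (ConjClasses G) = Nat.card (ConjClasses H) :=
  Nat.card_congr <| Quotient.congr e.toEquiv fun a b =>
    show IsConj a b ↔ IsConj (e a) (e b) from
      ⟨e.toMonoidHom.map_isConj, fun hab => by simpa using e.symm.toMonoidHom.map_isConj hab⟩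

theorem card_conjClasses_perm_fin_three : Nat.card (ConjClasses (Equiv.Perm (Fin 3))) = 3 := by
  rw [Nat.card_eq_fintype_card]
  decide

end

/-- If `G` is a nontrivial finite group with trivial center, then
`|G| ≥ 2·k(G)` where `k(G)` is the number of conjugacy classes of `G`, with
equality if and only if `G ≅ S₃`. -/
theorem two_mul_card_conjClasses_le_card_of_center_bot (G : Type) [Group G] [Finite G]
    [Nontrivial G] (h : Subgroup.center G = ⊥) :
    2 * Nat.card (ConjClasses G) ≤ Nat.card G ∧
      (Nat.card G = 2 * Nat.card (ConjClasses G) ↔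
        Nonempty (G ≃* Equiv.Perm (Fin 3))) := by
  refine ⟨two_mul_card_conjClasses_le_card h, fun heq => ?_, fun ⟨e⟩ => ?_⟩
  · obtain ⟨c, hc, hd⟩ := exists_ncard_carrier_eq_three_of_card_eq h heq
    exact nonempty_mulEquiv_perm_fin_three h (card_eq_six_of_ncard_carrier_eq_three hc hd)
  · rw [Nat.card_congr e.toEquiv, e.card_conjClasses_eq, card_conjClasses_perm_fin_three,
      Nat.card_perm, Nat.card_fin]
    rfl
end
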